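/- arXiv:2309.05881 — 3 statements merged into one kernel-verified Lean document; each statement's English description precedes it below -/
import Mathlib

section
/- For every pre-positional strategy, the probability that at some round t the multigraph G_t contains an induced simple (n−1)-cycle tends to 0 as n → ∞; that is, a.a.s. no pre-positional semi-random graph process ever produces a multigraph containing an induced simple (n−1)-cycle. -/
open Filter

/-- A pre-positional strategy: the player chooses `v_t` from the history of
previously added edges (each recorded as the pair `(u_s, v_s)`). -/
abbrev PreStrategy (n : ℕ) := List (Fin n × Fin n) → Fin n

/-- A post-positional strategy: the player chooses `v_t` from the history and
the random square `u_t`. -/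
abbrev PostStrategy (n : ℕ) := List (Fin n × Fin n) → Fin n → Fin n

/-- Build the history of the pre-positional process from the given history `h`
and the (remaining) sequence of random squares. -/
def preBuildAux {n : ℕ} (S : PreStrategy n) :
    List (Fin n × Fin n) → List (Fin n) → List (Fin n × Fin n)
  | h, [] => h
  | h, u :: us => preBuildAux S (h ++ [(u, S h)]) us

/-- The history (list of edges, in order) of the pre-positional process driven
by strategy `S` when the random squares are `us`. -/
def preTraj {n : ℕ} (S : PreStrategy n) (us : List (Fin n)) : List (Fin n × Fin n) :=
  preBuildAux S [] us

def postBuildAux {n : ℕ} (S : PostStrategy n) :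
    List (Fin n × Fin n) → List (Fin n) → List (Fin n × Fin n)
  | h, [] => h
  | h, u :: us => postBuildAux S (h ++ [(u, S h u)]) us

/-- The history (list of edges, in order) of the post-positional process driven
by strategy `S` when the random squares are `us`. -/
def postTraj {n : ℕ} (S : PostStrategy n) (us : List (Fin n)) : List (Fin n × Fin n) :=
  postBuildAux S [] us

/-- The underlying simple graph of the multigraph whose edges are listed in `l`. -/
def simpleOf {n : ℕ} (l : List (Fin n × Fin n)) : SimpleGraph (Fin n) :=
  SimpleGraph.fromEdgeSet {e | ∃ p ∈ l, e = s(p.1, p.2)}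

open Classical in
/-- The probability, with respect to the uniformly random independent squares
`u_1, …, u_t`, that the history of the first `t` rounds of the pre-positional
process driven by `S` satisfies `P`. -/
noncomputable def probPre (n t : ℕ) (S : PreStrategy n)
    (P : List (Fin n × Fin n) → Prop) : ℝ :=
  ((Finset.univ.filter fun u : Fin t → Fin n => P (preTraj S (List.ofFn u))).card : ℝ) /
    (n : ℝ) ^ t

open Classical in
/-- The probability, with respect to the uniformly random independent squares
`u_1, …, u_t`, that the history of the first `t` rounds of the post-positional
process driven by `S` satisfies `P`. -/
noncomputable def probPost (n t : ℕ) (S : PostStrategy n)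
    (P : List (Fin n × Fin n) → Prop) : ℝ :=
  ((Finset.univ.filter fun u : Fin t → Fin n => P (postTraj S (List.ofFn u))).card : ℝ) /
    (n : ℝ) ^ t

/-- The list of edges (with multiplicity) of the sub-multigraph induced by `S`. -/
def inducedEdgeList {n : ℕ} (l : List (Fin n × Fin n)) (S : Finset (Fin n)) :
    List (Sym2 (Fin n)) :=
  (l.filter fun p => decide (p.1 ∈ S ∧ p.2 ∈ S)).map fun p => s(p.1, p.2)

/-- The multigraph whose edges are listed in `l` contains an induced simple
`(n-1)`-cycle: there is a set `S` of `n-1` vertices such that the sub-multigraph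
induced by `S` has no multiple edges, no loops, and is exactly a cycle on `S`
(every vertex of `S` has exactly two neighbours and the induced graph is connected). -/
def HasInducedCycle {n : ℕ} (l : List (Fin n × Fin n)) : Prop :=
  ∃ S : Finset (Fin n), S.card = n - 1 ∧
    (inducedEdgeList l S).Nodup ∧
    (∀ e ∈ inducedEdgeList l S, ¬ e.IsDiag) ∧
    (∀ v ∈ S,
      ((SimpleGraph.fromEdgeSet {e | e ∈ inducedEdgeList l S}).neighborSet v).ncard = 2) ∧
    ((SimpleGraph.fromEdgeSet {e | e ∈ inducedEdgeList l S}).induce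
        (S : Set (Fin n))).Connected

/-!
Fix a set `S` of `m` vertices. If the multigraph has an induced simple cycle on `S`, the edges
with both ends in `S` form a loopless 2-regular multigraph on `S`; it has exactly `m` edges, and
edges inside `S` only accumulate. A new edge `uv` lies inside `S` only if the random `u` does, and
for the given `v` at most one `u` supplies the last missing edge, while at most three values of
`u` leave a configuration that a single further edge completes (count the degree deficiencies).
Hence the potential equal to `1`, `1/m`, `3/m²` when no, one, or at least two edges are missing
(and `0` once completion is impossible) is a supermartingale, so `S` ever carries such a
multigraph with probability at most `3/m²`. A union bound over the `n` sets of size `n - 1`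
gives `3n/(n-1)² → 0`.
-/

namespace EdgeList

variable {V : Type*} {S : Finset V} {L M : List (Sym2 V)}

def IsLooplessOn (S : Finset V) (L : List (Sym2 V)) : Prop :=
  ∀ e ∈ L, ¬ e.IsDiag ∧ ∀ x ∈ e, x ∈ S

lemma IsLooplessOn.of_sublist (hM : IsLooplessOn S M) (h : L.Sublist M) : IsLooplessOn S L :=
  fun e he => hM e (h.subset he)

variable [DecidableEq V]

def degree (L : List (Sym2 V)) (x : V) : ℕ :=
  L.countP (x ∈ ·)

def IsTwoRegularOn (S : Finset V) (L : List (Sym2 V)) : Prop :=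
  IsLooplessOn S L ∧ ∀ x ∈ S, degree L x = 2

@[simp]
lemma degree_append (L M : List (Sym2 V)) (x : V) :
    degree (L ++ M) x = degree L x + degree M x :=
  List.countP_append

lemma degree_pair (a b x : V) : degree [s(a, b)] x = if x = a ∨ x = b then 1 else 0 := by
  simp [degree, List.countP_cons, Sym2.mem_iff]

lemma degree_le_of_sublist (h : L.Sublist M) (x : V) : degree L x ≤ degree M x :=
  h.countP_le

lemma IsLooplessOn.sum_degree (hL : IsLooplessOn S L) :
    ∑ x ∈ S, degree L x = 2 * L.length := by
  induction L with
  | nil => simp [degree]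
  | cons e L ih =>
    obtain ⟨hdiag, hS⟩ := hL e List.mem_cons_self
    induction e with | h a b => ?_
    have hab : a ≠ b := by simpa using hdiag
    have hpair : ∑ x ∈ S, degree [s(a, b)] x = 2 := by
      simp_rw [degree_pair, Finset.sum_boole]
      rw [Finset.filter_or, Finset.filter_eq', Finset.filter_eq',
        if_pos (hS a (Sym2.mem_mk_left a b)), if_pos (hS b (Sym2.mem_mk_right a b))]
      simp [Finset.card_pair hab]
    have hcons : ∀ x, degree (s(a, b) :: L) x = degree [s(a, b)] x + degree L x :=
      fun x => degree_append [s(a, b)] L x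
    simp only [hcons, Finset.sum_add_distrib, hpair,
      ih (fun e he => hL e (List.mem_cons_of_mem _ he)), List.length_cons]
    ring

lemma IsTwoRegularOn.length_eq (h : IsTwoRegularOn S L) : L.length = S.card := by
  have := h.1.sum_degree
  rw [Finset.sum_congr rfl h.2, Finset.sum_const, smul_eq_mul] at this
  omega

lemma IsTwoRegularOn.length_add_one_eq {e : Sym2 V} (h : IsTwoRegularOn S (L ++ [e])) :
    L.length + 1 = S.card := by
  simpa using h.length_eq

lemma IsTwoRegularOn.mem_of_mem (h : IsTwoRegularOn S L) {e : Sym2 V} (he : e ∈ L) {x : V}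
    (hx : x ∈ e) : x ∈ S :=
  (h.1 e he).2 x hx

lemma IsTwoRegularOn.ne_of_mem (h : IsTwoRegularOn S L) {a b : V} (he : s(a, b) ∈ L) :
    a ≠ b := by
  simpa using (h.1 _ he).1

open Classical in
lemma card_filter_isTwoRegularOn_append_le_one (S : Finset V) (L : List (Sym2 V)) (v : V) :
    (S.filter fun u => IsTwoRegularOn S (L ++ [s(u, v)])).card ≤ 1 := by
  refine Finset.card_le_one.2 fun u₁ hu₁ u₂ hu₂ => ?_
  obtain ⟨-, h₁⟩ := Finset.mem_filter.1 hu₁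
  obtain ⟨hu₂S, h₂⟩ := Finset.mem_filter.1 hu₂
  by_contra hne
  have hu₂v : u₂ ≠ v := h₂.ne_of_mem (by simp)
  have hdeg₁ := h₁.2 u₂ hu₂S
  have hdeg₂ := h₂.2 u₂ hu₂S
  simp only [degree_append, degree_pair] at hdeg₁ hdeg₂
  rw [if_neg (by rintro (h | h) <;> [exact hne h.symm; exact hu₂v h])] at hdeg₁
  rw [if_pos (Or.inl trivial)] at hdeg₂
  omega

lemma IsTwoRegularOn.degree_le_one_of_mem_append (h : IsTwoRegularOn S (L ++ M))
    {e : Sym2 V} (he : e ∈ M) {x : V} (hx : x ∈ e) :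
    degree L x ≤ 1 := by
  have hM : 1 ≤ degree M x := List.countP_pos_iff.2 ⟨e, he, by simpa using hx⟩
  have := h.2 x (h.mem_of_mem (List.mem_append_right L he) hx)
  rw [degree_append] at this
  omega

lemma sum_degree_add_card_filter_degree_le_one_le (hL : ∀ x ∈ S, degree L x ≤ 2) :
    ∑ x ∈ S, degree L x + (S.filter fun x => degree L x ≤ 1).card ≤ 2 * S.card := by
  have hpoint : ∀ x ∈ S, degree L x + (if degree L x ≤ 1 then 1 else 0) ≤ 2 :=
    fun x hx => by split_ifs <;> linarith [hL x hx]
  have := Finset.sum_le_sum hpoint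
  rwa [Finset.sum_add_distrib, Finset.sum_boole, Finset.sum_const, smul_eq_mul, mul_comm,
    Nat.cast_id] at this

open Classical in
/-- `L` has `|S| - 2` edges, so the deficiencies `2 - degree L x` over `x ∈ S` sum to `4`, and
`v` as well as every admissible `u` has positive deficiency. -/
lemma card_filter_isTwoRegularOn_append_pair_le_three (S : Finset V) (L : List (Sym2 V))
    (v : V) : (S.filter fun u => ∃ e, IsTwoRegularOn S (L ++ [s(u, v), e])).card ≤ 3 := by
  set U := S.filter fun u => ∃ e, IsTwoRegularOn S (L ++ [s(u, v), e])
  rcases U.eq_empty_or_nonempty with hU | ⟨u₁, hu₁⟩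
  · simp [hU]
  obtain ⟨-, e₁, h₁⟩ := Finset.mem_filter.1 hu₁
  have hvS : v ∈ S := h₁.mem_of_mem (e := s(u₁, v)) (by simp) (Sym2.mem_mk_right _ _)
  have hlen : L.length + 2 = S.card := by simpa using h₁.length_eq
  have hsum : ∑ x ∈ S, degree L x = 2 * L.length :=
    (h₁.1.of_sublist (List.sublist_append_left _ _)).sum_degree
  have hD := sum_degree_add_card_filter_degree_le_one_le fun x hx =>
    (degree_le_of_sublist (List.sublist_append_left L _) x).trans (h₁.2 x hx).le
  have hUD : insert v U ⊆ S.filter fun x => degree L x ≤ 1 := by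
    refine Finset.insert_subset_iff.2 ⟨Finset.mem_filter.2 ⟨hvS, ?_⟩, fun u hu => ?_⟩
    · exact h₁.degree_le_one_of_mem_append (e := s(u₁, v)) (by simp) (Sym2.mem_mk_right _ _)
    · obtain ⟨huS, e, h⟩ := Finset.mem_filter.1 hu
      exact Finset.mem_filter.2
        ⟨huS, h.degree_le_one_of_mem_append (e := s(u, v)) (by simp) (Sym2.mem_mk_left _ _)⟩
  have hvU : v ∉ U := fun hv => by
    obtain ⟨-, e, h⟩ := Finset.mem_filter.1 hv
    exact h.ne_of_mem (a := v) (b := v) (by simp) rfl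
  have := Finset.card_le_card hUD
  rw [Finset.card_insert_of_notMem hvU] at this
  omega

lemma degree_eq_ncard_neighborSet (hnd : L.Nodup)
    (hL : ∀ e ∈ L, ¬ e.IsDiag) (x : V) :
    degree L x = ((SimpleGraph.fromEdgeSet {e | e ∈ L}).neighborSet x).ncard := by
  rw [← Nat.card_coe_set_eq, ← Nat.card_congr (SimpleGraph.incidenceSetEquivNeighborSet _ x)]
  have hinc : (SimpleGraph.fromEdgeSet {e | e ∈ L}).incidenceSet x
      = ↑(L.filter (x ∈ ·)).toFinset := by
    ext e
    simp only [SimpleGraph.incidenceSet, SimpleGraph.edgeSet_fromEdgeSet, Set.mem_sdiff,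
      Set.mem_ofPred_eq, Sym2.mem_diagSet, List.toFinset_filter,
      decide_eq_true_eq, Finset.coe_filter, List.mem_toFinset, and_congr_left_iff,
      and_iff_left_iff_imp]
    exact fun _ => hL e
  rw [hinc, Nat.card_coe_set_eq, Set.ncard_coe_finset, List.toFinset_card_of_nodup (hnd.filter _),
    degree, List.countP_eq_length_filter]

open Classical in
noncomputable def potential (S : Finset V) (L : List (Sym2 V)) : ℝ :=
  if IsTwoRegularOn S L then 1
  else if ∃ e, IsTwoRegularOn S (L ++ [e]) then 1 / S.card
  else if L.length + 2 ≤ S.card then 3 / S.card ^ 2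
  else 0

lemma potential_of_length_add_two_le (h : L.length + 2 ≤ S.card) :
    potential S L = 3 / S.card ^ 2 := by
  have h₀ : ¬ IsTwoRegularOn S L := fun hL => by have := hL.length_eq; omega
  have h₁ : ¬ ∃ e, IsTwoRegularOn S (L ++ [e]) := fun ⟨e, hL⟩ => by
    have := hL.length_add_one_eq; omega
  rw [potential, if_neg h₀, if_neg h₁, if_pos h]

open Classical in
lemma potential_of_length_add_one_eq (h : L.length + 1 = S.card) :
    potential S L = if ∃ e, IsTwoRegularOn S (L ++ [e]) then (1 : ℝ) / S.card else 0 := by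
  have h₀ : ¬ IsTwoRegularOn S L := fun hL => by have := hL.length_eq; omega
  rw [potential, if_neg h₀, if_neg (by omega : ¬ L.length + 2 ≤ S.card)]

open Classical in
lemma potential_of_card_le_length (h : S.card ≤ L.length) :
    potential S L = if IsTwoRegularOn S L then 1 else 0 := by
  have h₁ : ¬ ∃ e, IsTwoRegularOn S (L ++ [e]) := fun ⟨e, hL⟩ => by
    have := hL.length_add_one_eq; omega
  rw [potential, if_neg h₁, if_neg (by omega : ¬ L.length + 2 ≤ S.card)]

lemma potential_nonneg (S : Finset V) (L : List (Sym2 V)) : 0 ≤ potential S L := by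
  unfold potential
  split_ifs <;> positivity

lemma potential_le_one (hS : 2 ≤ S.card) (L : List (Sym2 V)) : potential S L ≤ 1 := by
  have hm : (2 : ℝ) ≤ S.card := by exact_mod_cast hS
  unfold potential
  split_ifs
  · exact le_rfl
  · rw [div_le_one (by linarith)]; linarith
  · rw [div_le_one (by positivity)]; nlinarith
  · exact zero_le_one

open Classical in
lemma sum_potential_append_le (hL : ¬ IsTwoRegularOn S L) (v : V) :
    ∑ u ∈ S, potential S (L ++ [s(u, v)]) ≤ S.card * potential S L := by
  have hlen : ∀ u, (L ++ [s(u, v)]).length = L.length + 1 := fun u => by simp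
  rcases lt_trichotomy (L.length + 2) S.card with hlt | heq | hgt
  · rw [Finset.sum_congr rfl fun u _ => potential_of_length_add_two_le (by rw [hlen]; omega),
      potential_of_length_add_two_le hlt.le, Finset.sum_const, nsmul_eq_mul]
  · calc ∑ u ∈ S, potential S (L ++ [s(u, v)])
        = ∑ u ∈ S, if ∃ e, IsTwoRegularOn S (L ++ [s(u, v)] ++ [e]) then 1 / (S.card : ℝ)
            else 0 :=
          Finset.sum_congr rfl fun u _ =>
            potential_of_length_add_one_eq (L := L ++ [s(u, v)]) (by rw [hlen]; omega)
      _ ≤ 3 * (1 / S.card) := by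
          simp only [List.append_assoc, List.cons_append, List.nil_append]
          rw [Finset.sum_ite, Finset.sum_const_zero, add_zero, Finset.sum_const, nsmul_eq_mul]
          gcongr
          exact_mod_cast card_filter_isTwoRegularOn_append_pair_le_three S L v
      _ = S.card * potential S L := by
          rw [potential_of_length_add_two_le heq.le]
          field_simp
  · have hcard := fun u => potential_of_card_le_length (S := S) (L := L ++ [s(u, v)])
      (by rw [hlen]; omega)
    rw [Finset.sum_congr rfl fun u _ => hcard u, Finset.sum_boole]
    by_cases hone : L.length + 1 = S.card
    · rw [potential_of_length_add_one_eq hone]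
      split_ifs with hext
      · rw [mul_one_div_cancel (Nat.cast_ne_zero.2 (by omega))]
        exact_mod_cast card_filter_isTwoRegularOn_append_le_one S L v
      · rw [Finset.filter_false_of_mem fun u _ h => hext ⟨_, h⟩]
        simp
    · rw [potential_of_card_le_length (by omega), if_neg hL,
        Finset.filter_false_of_mem fun u _ h => by have := h.length_add_one_eq; omega]
      simp

end EdgeList

lemma List.exists_take_append_singleton_iff {α : Type*} (Q : List α → Prop) (H : List α)
    (p : α) :
    (∃ s, Q ((H ++ [p]).take s)) ↔ (∃ s, Q (H.take s)) ∨ Q (H ++ [p]) := by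
  constructor
  · rintro ⟨s, hs⟩
    rcases le_or_gt s H.length with h | h
    · exact Or.inl ⟨s, by rwa [List.take_append_of_le_length h] at hs⟩
    · rw [List.take_of_length_le (by rw [List.length_append, List.length_singleton]; omega)]
        at hs
      exact Or.inr hs
  · rintro (⟨s, hs⟩ | h)
    · refine ⟨min s H.length, ?_⟩
      rwa [List.take_append_of_le_length (min_le_right _ _), ← List.take_eq_take_min]
    · exact ⟨(H ++ [p]).length, by rwa [List.take_length]⟩

section InducedEdgeList

open EdgeList

variable {n : ℕ}

@[simp]
lemma inducedEdgeList_nil (S : Finset (Fin n)) : inducedEdgeList [] S = [] :=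
  rfl

lemma inducedEdgeList_append_singleton (l : List (Fin n × Fin n)) (S : Finset (Fin n))
    (a b : Fin n) :
    inducedEdgeList (l ++ [(a, b)]) S
      = if a ∈ S ∧ b ∈ S then inducedEdgeList l S ++ [s(a, b)] else inducedEdgeList l S := by
  unfold inducedEdgeList
  split_ifs with h <;> simp [h]

lemma mem_of_mem_inducedEdgeList {l : List (Fin n × Fin n)} {S : Finset (Fin n)}
    {e : Sym2 (Fin n)} (he : e ∈ inducedEdgeList l S) {x : Fin n} (hx : x ∈ e) : x ∈ S := by
  obtain ⟨p, hp, rfl⟩ := List.mem_map.1 he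
  have := (List.mem_filter.1 hp).2
  simp only [decide_eq_true_eq] at this
  rcases Sym2.mem_iff.1 hx with rfl | rfl
  exacts [this.1, this.2]

lemma HasInducedCycle.exists_isTwoRegularOn {l : List (Fin n × Fin n)} (h : HasInducedCycle l) :
    ∃ S : Finset (Fin n), S.card = n - 1 ∧ IsTwoRegularOn S (inducedEdgeList l S) := by
  obtain ⟨S, hcard, hnd, hdiag, hdeg, -⟩ := h
  refine ⟨S, hcard, fun e he => ⟨hdiag e he, fun x => mem_of_mem_inducedEdgeList he⟩,
    fun x hx => ?_⟩
  rw [degree_eq_ncard_neighborSet hnd hdiag, hdeg x hx]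

end InducedEdgeList

section Probability

variable {n : ℕ}

open Classical in
noncomputable def probFrom (n t : ℕ) (St : PreStrategy n) (H : List (Fin n × Fin n))
    (P : List (Fin n × Fin n) → Prop) : ℝ :=
  ((Finset.univ.filter fun u : Fin t → Fin n => P (preBuildAux St H (List.ofFn u))).card : ℝ) /
    (n : ℝ) ^ t

lemma probPre_eq_probFrom_nil (t : ℕ) (St : PreStrategy n) (P : List (Fin n × Fin n) → Prop) :
    probPre n t St P = probFrom n t St [] P :=
  rfl

open Classical in
lemma probFrom_zero (St : PreStrategy n) (H : List (Fin n × Fin n))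
    (P : List (Fin n × Fin n) → Prop) : probFrom n 0 St H P = if P H then 1 else 0 := by
  by_cases hP : P H <;> simp [probFrom, preBuildAux, hP, Finset.filter_true_of_mem,
    Finset.filter_false_of_mem]

lemma probFrom_succ (t : ℕ) (St : PreStrategy n) (H : List (Fin n × Fin n))
    (P : List (Fin n × Fin n) → Prop) :
    probFrom n (t + 1) St H P = (∑ u, probFrom n t St (H ++ [(u, St H)]) P) / n := by
  classical
  have hcard : (Finset.univ.filter fun u : Fin (t + 1) → Fin n =>
        P (preBuildAux St H (List.ofFn u))).card
      = ∑ u₀ : Fin n, (Finset.univ.filter fun u : Fin t → Fin n =>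
        P (preBuildAux St (H ++ [(u₀, St H)]) (List.ofFn u))).card := by
    rw [Finset.card_filter, ← (Fin.consEquiv fun _ => Fin n).sum_comp, Fintype.sum_prod_type]
    refine Finset.sum_congr rfl fun u₀ _ => ?_
    rw [Finset.card_filter]
    refine Finset.sum_congr rfl fun u _ => ?_
    simp [Fin.consEquiv, List.ofFn_succ, preBuildAux]
  unfold probFrom
  rw [hcard, Nat.cast_sum, ← Finset.sum_div, div_div, pow_succ]

lemma probFrom_le_of_superharmonic (St : PreStrategy n) (P : List (Fin n × Fin n) → Prop)
    (V : List (Fin n × Fin n) → ℝ) (hV₀ : ∀ H, 0 ≤ V H) (hVP : ∀ H, P H → 1 ≤ V H)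
    (hV : ∀ H, ∑ u, V (H ++ [(u, St H)]) ≤ n * V H) (t : ℕ) (H : List (Fin n × Fin n)) :
    probFrom n t St H P ≤ V H := by
  induction t generalizing H with
  | zero =>
    rw [probFrom_zero]
    split_ifs with hP
    exacts [hVP H hP, hV₀ H]
  | succ t ih =>
    rw [probFrom_succ]
    exact div_le_of_le_mul₀ (Nat.cast_nonneg n) (hV₀ H)
      (((Finset.sum_le_sum fun u _ => ih _).trans (hV H)).trans_eq (mul_comm _ _))

lemma probFrom_le_sum_of_imp {ι : Type*} (St : PreStrategy n) (t : ℕ)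
    (H : List (Fin n × Fin n)) {P : List (Fin n × Fin n) → Prop} (I : Finset ι)
    {Q : ι → List (Fin n × Fin n) → Prop} (hPQ : ∀ H, P H → ∃ i ∈ I, Q i H) :
    probFrom n t St H P ≤ ∑ i ∈ I, probFrom n t St H (Q i) := by
  classical
  unfold probFrom
  rw [← Finset.sum_div]
  gcongr
  rw [← Nat.cast_sum, Nat.cast_le]
  refine (Finset.card_le_card fun u hu => ?_).trans (Finset.card_biUnion_le (s := I))
  obtain ⟨i, hi, hQ⟩ := hPQ _ (Finset.mem_filter.1 hu).2
  exact Finset.mem_biUnion.2 ⟨i, hi, Finset.mem_filter.2 ⟨Finset.mem_univ u, hQ⟩⟩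

lemma probPre_nonneg (t : ℕ) (St : PreStrategy n) (P : List (Fin n × Fin n) → Prop) :
    0 ≤ probPre n t St P := by
  unfold probPre
  positivity

end Probability

section InducedTwoFactor

open EdgeList

variable {n : ℕ} {S : Finset (Fin n)} {H : List (Fin n × Fin n)}

def EverTwoRegularOn (S : Finset (Fin n)) (H : List (Fin n × Fin n)) : Prop :=
  ∃ s, IsTwoRegularOn S (inducedEdgeList (H.take s) S)

open Classical in
noncomputable def historyPotential (S : Finset (Fin n)) (H : List (Fin n × Fin n)) : ℝ :=
  if EverTwoRegularOn S H then 1 else potential S (inducedEdgeList H S)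

lemma everTwoRegularOn_append_singleton_iff {p : Fin n × Fin n} : EverTwoRegularOn S (H ++ [p])
      ↔ EverTwoRegularOn S H ∨ IsTwoRegularOn S (inducedEdgeList (H ++ [p]) S) :=
  List.exists_take_append_singleton_iff (fun l => IsTwoRegularOn S (inducedEdgeList l S)) H p

lemma historyPotential_append_of_not_ever
    (hH : ¬ EverTwoRegularOn S H) (p : Fin n × Fin n) :
    historyPotential S (H ++ [p]) = potential S (inducedEdgeList (H ++ [p]) S) := by
  rw [historyPotential, everTwoRegularOn_append_singleton_iff, or_iff_right hH]
  split_ifs with h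
  · rw [potential, if_pos h]
  · rfl

lemma sum_historyPotential_append_le (hS : 2 ≤ S.card)
    (H : List (Fin n × Fin n)) (v : Fin n) :
    ∑ u, historyPotential S (H ++ [(u, v)]) ≤ n * historyPotential S H := by
  by_cases hH : EverTwoRegularOn S H
  · have hle : ∀ H', historyPotential S H' ≤ 1 := fun H' => by
      unfold historyPotential
      split_ifs
      exacts [le_rfl, potential_le_one hS _]
    rw [historyPotential, if_pos hH, mul_one]
    calc ∑ u, historyPotential S (H ++ [(u, v)]) ≤ ∑ _u : Fin n, (1 : ℝ) :=
          Finset.sum_le_sum fun u _ => hle _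
      _ = n := by simp
  have hL : ¬ IsTwoRegularOn S (inducedEdgeList H S) :=
    fun h => hH ⟨H.length, by rwa [List.take_length]⟩
  simp only [historyPotential_append_of_not_ever hH, inducedEdgeList_append_singleton]
  rw [historyPotential, if_neg hH]
  by_cases hv : v ∈ S
  · simp only [hv, and_true]
    set L := inducedEdgeList H S
    calc ∑ u, potential S (if u ∈ S then L ++ [s(u, v)] else L)
        = ∑ u ∈ S, potential S (L ++ [s(u, v)]) + ∑ _u ∈ Sᶜ, potential S L := by
          rw [← Finset.sum_add_sum_compl S]
          congr 1 <;> refine Finset.sum_congr rfl fun u hu => ?_ <;> simp_all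
      _ ≤ S.card * potential S L + Sᶜ.card * potential S L := by
          rw [Finset.sum_const, nsmul_eq_mul]
          gcongr
          exact sum_potential_append_le hL v
      _ = n * potential S L := by
          rw [← add_mul, ← Nat.cast_add, Finset.card_add_card_compl, Fintype.card_fin]
  · simp [hv]

lemma historyPotential_nonneg (S : Finset (Fin n)) (H : List (Fin n × Fin n)) :
    0 ≤ historyPotential S H := by
  unfold historyPotential
  split_ifs
  exacts [zero_le_one, potential_nonneg S _]

lemma historyPotential_of_ever
    (h : EverTwoRegularOn S H) : historyPotential S H = 1 :=
  if_pos h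

lemma historyPotential_nil (hS : 3 ≤ S.card) :
    historyPotential S [] = 3 / S.card ^ 2 := by
  have hnil : ¬ IsTwoRegularOn S [] := fun h => by
    have := h.length_eq
    rw [List.length_nil] at this
    omega
  rw [historyPotential, if_neg fun ⟨s, h⟩ => hnil (by simpa using h), inducedEdgeList_nil]
  exact potential_of_length_add_two_le (by simp only [List.length_nil]; omega)

lemma probFrom_everTwoRegularOn_le (hS : 3 ≤ S.card) (St : PreStrategy n)
    (t : ℕ) : probFrom n t St [] (EverTwoRegularOn S) ≤ 3 / S.card ^ 2 :=
  historyPotential_nil hS ▸ probFrom_le_of_superharmonic St _ _ (historyPotential_nonneg S)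
    (fun _ h => (historyPotential_of_ever h).ge)
    (fun H => sum_historyPotential_append_le (by omega) H (St H)) t []

lemma probPre_hasInducedCycle_le (hn : 4 ≤ n) (St : PreStrategy n) (t : ℕ) :
    probPre n t St (fun l => ∃ s, HasInducedCycle (l.take s))
      ≤ n * (3 / ((n - 1 : ℕ) : ℝ) ^ 2) := by
  rw [probPre_eq_probFrom_nil]
  calc _ ≤ ∑ S ∈ Finset.univ.powersetCard (n - 1), probFrom n t St [] (EverTwoRegularOn S) :=
        probFrom_le_sum_of_imp St t [] _ fun H ⟨s, hs⟩ => by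
          obtain ⟨S, hcard, hreg⟩ := hs.exists_isTwoRegularOn
          exact ⟨S, Finset.mem_powersetCard.2 ⟨Finset.subset_univ S, hcard⟩, s, hreg⟩
    _ ≤ ∑ S ∈ Finset.univ.powersetCard (n - 1), 3 / ((n - 1 : ℕ) : ℝ) ^ 2 :=
        Finset.sum_le_sum fun S hS => by
          have hcard := (Finset.mem_powersetCard.1 hS).2
          exact hcard ▸ probFrom_everTwoRegularOn_le (by omega) St t
    _ = n * (3 / ((n - 1 : ℕ) : ℝ) ^ 2) := by
        rw [Finset.sum_const, Finset.card_powersetCard, Finset.card_univ, Fintype.card_fin,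
          Nat.choose_symm (by omega), Nat.choose_one_right, nsmul_eq_mul]

end InducedTwoFactor

lemma mul_three_div_pred_sq_le {n : ℕ} (hn : 2 ≤ n) :
    (n : ℝ) * (3 / ((n - 1 : ℕ) : ℝ) ^ 2) ≤ 12 / n := by
  have h : (2 : ℝ) ≤ n := by exact_mod_cast hn
  rw [Nat.cast_sub (by omega), Nat.cast_one, mul_div_assoc', div_le_div_iff₀ (by nlinarith)
    (by linarith)]
  nlinarith

/-- For every pre-positional strategy, the probability that the process ever
produces a multigraph containing an induced simple `(n-1)`-cycle tends to `0`
as `n → ∞`.  (The probability of "ever" is the supremum over finite horizons of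
the probability that this happens within the first `t` rounds.) -/
theorem pre_no_induced_cycle (Spre : (n : ℕ) → PreStrategy n) :
    Tendsto (fun n : ℕ =>
        ⨆ t : ℕ, probPre n t (Spre n) (fun l => ∃ s, HasInducedCycle (l.take s)))
      atTop (nhds 0) := by
  refine tendsto_of_tendsto_of_tendsto_of_le_of_le' tendsto_const_nhds
    (tendsto_const_div_atTop_nhds_zero_nat 12) ?_ ?_
  · exact Eventually.of_forall fun n => Real.iSup_nonneg fun t => probPre_nonneg t _ _
  · filter_upwards [eventually_ge_atTop 4] with n hn
    exact Real.iSup_le (fun t => (probPre_hasInducedCycle_le hn _ t).trans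
      (mul_three_div_pred_sq_le (by omega))) (by positivity)
end

section
/- There exist a constant C > 0 and a post-positional strategy such that a.a.s. the post-positional semi-random graph process constructs, within C·n·ln n rounds, a multigraph containing an induced simple (n−1)-cycle. -/
open Filter

/-!
Keep vertex `0` aside and build the cycle `1 → 2 → ⋯ → n - 1 → 1` on the other vertices: the
first time a square `u ≠ 0` is drawn, join it to its successor on the cycle, and otherwise join
the square to `0`. Edges at `0` are invisible in the subgraph induced by `{1, …, n - 1}`, so as
soon as every vertex other than `0` has been drawn, that subgraph is exactly the cycle, without
repeated edges. By the union bound some vertex is still missing after `t` rounds with probability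
at most `n (1 - 1/n) ^ t ≤ n e ^ (-t/n)`, which is at most `1/n` once `t ≥ 2 n ln n`.
-/

open Finset SimpleGraph

theorem sym2_mk_add_one_injective (k : ℕ) :
    Function.Injective fun i : Fin (k + 3) => s(i, i + 1) := by
  intro i j hij
  rcases Sym2.eq_iff.1 hij with ⟨h, -⟩ | ⟨rfl, h⟩
  · exact h
  · rw [add_assoc, add_eq_left, Fin.ext_iff, Fin.val_add, Fin.val_one, Fin.val_zero,
      Nat.mod_eq_of_lt (by omega)] at h
    omega

theorem hasInducedCycle_of_mem_inducedEdgeList_iff {n k : ℕ} (l : List (Fin n × Fin n))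
    (f : Fin (k + 3) ↪ Fin n) (hn : n - 1 = k + 3)
    (hnodup : (inducedEdgeList l (univ.map f)).Nodup)
    (hedges : ∀ e, e ∈ inducedEdgeList l (univ.map f) ↔ ∃ i, e = s(f i, f (i + 1))) :
    HasInducedCycle l := by
  have hgraph : fromEdgeSet {e | e ∈ inducedEdgeList l (univ.map f)} =
      (cycleGraph (k + 3)).map f := by
    ext x y
    simp only [fromEdgeSet_adj, Set.mem_ofPred_eq, hedges, map_adj, cycleGraph_adj,
      sub_eq_iff_eq_add]
    constructor
    · rintro ⟨⟨i, hi⟩, -⟩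
      rcases Sym2.eq_iff.1 hi with ⟨rfl, rfl⟩ | ⟨rfl, rfl⟩
      · exact ⟨i, i + 1, Or.inr (add_comm _ _), rfl, rfl⟩
      · exact ⟨i + 1, i, Or.inl (add_comm _ _), rfl, rfl⟩
    · rintro ⟨a, b, rfl | rfl, rfl, rfl⟩
      · exact ⟨⟨b, by rw [add_comm 1 b, Sym2.eq_swap]⟩, by simp⟩
      · exact ⟨⟨a, by rw [add_comm 1 a]⟩, by simp⟩
  refine ⟨univ.map f, by simp [hn], hnodup, ?_, ?_, ?_⟩
  · intro e he
    obtain ⟨i, rfl⟩ := (hedges e).1 he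
    simp
  · intro v hv
    obtain ⟨a, -, rfl⟩ := mem_map.1 hv
    rw [hgraph, neighborSet_map, Set.ncard_image_of_injective _ f.injective,
      ← coe_neighborFinset, Set.ncard_coe_finset, card_neighborFinset_eq_degree,
      cycleGraph_degree_three_le]
  · rw [hgraph, coe_map, coe_univ, Set.image_univ]
    exact (Embedding.map f _).isoInduceRange.connected_iff.1 cycleGraph_connected

theorem postBuildAux_prefix {n : ℕ} (S : PostStrategy n) (h : List (Fin n × Fin n))
    (us : List (Fin n)) : h <+: postBuildAux S h us := by
  induction us generalizing h with
  | nil => exact List.prefix_rfl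
  | cons u us ih => exact (List.prefix_append _ _).trans (ih _)

theorem length_postBuildAux {n : ℕ} (S : PostStrategy n) (h : List (Fin n × Fin n))
    (us : List (Fin n)) : (postBuildAux S h us).length = h.length + us.length := by
  induction us generalizing h with
  | nil => rfl
  | cons u us ih => simp [postBuildAux, ih, add_assoc, add_comm 1]

theorem length_postTraj {n : ℕ} (S : PostStrategy n) (us : List (Fin n)) :
    (postTraj S us).length = us.length := by
  simp [postTraj, length_postBuildAux]

theorem card_filter_exists_forall_ne_le {ι α : Type*} [Fintype ι] [DecidableEq ι] [Fintype α]
    [DecidableEq α] (T : Finset α) :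
    #{u : ι → α | ∃ v ∈ T, ∀ i, u i ≠ v} ≤ #T * (Fintype.card α - 1) ^ Fintype.card ι := by
  calc #{u : ι → α | ∃ v ∈ T, ∀ i, u i ≠ v}
      ≤ #(T.biUnion fun v => Fintype.piFinset fun _ : ι => univ.erase v) := by
        refine card_le_card fun u hu => ?_
        obtain ⟨v, hv, hu⟩ := (mem_filter.1 hu).2
        exact mem_biUnion.2
          ⟨v, hv, Fintype.mem_piFinset.2 fun i => mem_erase.2 ⟨hu i, mem_univ _⟩⟩
    _ ≤ ∑ v ∈ T, #(Fintype.piFinset fun _ : ι => univ.erase v) := card_biUnion_le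
    _ = #T * (Fintype.card α - 1) ^ Fintype.card ι := by
        simp [Fintype.card_piFinset, card_erase_of_mem]

theorem probPost_le_one {n t : ℕ} (S : PostStrategy n) (P : List (Fin n × Fin n) → Prop) :
    probPost n t S P ≤ 1 := by
  classical
  refine div_le_one_of_le₀ ?_ (by positivity)
  exact_mod_cast (card_filter_le _ _).trans (by simp)

open Classical in
theorem one_sub_card_mul_le_probPost {n t : ℕ} (hn : 0 < n) (S : PostStrategy n)
    (P : List (Fin n × Fin n) → Prop) (T : Finset (Fin n))
    (hP : ∀ u : Fin t → Fin n, (∀ v ∈ T, v ∈ Set.range u) → P (postTraj S (List.ofFn u))) :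
    1 - #T * (1 - (n : ℝ)⁻¹) ^ t ≤ probPost n t S P := by
  set G := #{u : Fin t → Fin n | P (postTraj S (List.ofFn u))}
  have hcount : n ^ t ≤ #T * (n - 1) ^ t + G := by
    calc n ^ t = #(univ : Finset (Fin t → Fin n)) := by simp
      _ ≤ #(({u | ∃ v ∈ T, ∀ i, u i ≠ v} : Finset (Fin t → Fin n)) ∪
          ({u | P (postTraj S (List.ofFn u))} : Finset (Fin t → Fin n))) := by
        refine card_le_card fun u _ => ?_
        by_cases hmiss : ∃ v ∈ T, ∀ i, u i ≠ v
        · exact mem_union_left _ (mem_filter.2 ⟨mem_univ _, hmiss⟩)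
        · push Not at hmiss
          exact mem_union_right _ (mem_filter.2 ⟨mem_univ _, hP u hmiss⟩)
      _ ≤ _ := card_union_le _ _
      _ ≤ #T * (n - 1) ^ t + G := by
        refine Nat.add_le_add_right ?_ G
        simpa using card_filter_exists_forall_ne_le (ι := Fin t) T
  have hcount_real := Nat.cast_le (α := ℝ).2 hcount
  push_cast [Nat.cast_sub hn] at hcount_real
  have hfrac : 1 - (n : ℝ)⁻¹ = (n - 1) / n := by field_simp
  calc 1 - #T * (1 - (n : ℝ)⁻¹) ^ t
        = ((n : ℝ) ^ t - #T * ((n : ℝ) - 1) ^ t) / (n : ℝ) ^ t := by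
        rw [hfrac, div_pow]
        field_simp
    _ ≤ G / (n : ℝ) ^ t := by gcongr; linarith
    _ = probPost n t S P := rfl

theorem one_sub_inv_pow_le_inv_sq {n t : ℕ} (hn : 0 < n) (ht : 2 * n * Real.log n ≤ t) :
    (1 - (n : ℝ)⁻¹) ^ t ≤ ((n : ℝ) ^ 2)⁻¹ := by
  calc (1 - (n : ℝ)⁻¹) ^ t ≤ Real.exp (-(n : ℝ)⁻¹) ^ t := by
        gcongr
        · exact sub_nonneg.2 (inv_le_one_of_one_le₀ (Nat.one_le_cast.2 hn))
        · exact Real.one_sub_le_exp_neg _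
    _ = Real.exp (-(t / n)) := by rw [← Real.exp_nat_mul]; ring_nf
    _ ≤ Real.exp (Real.log ((n : ℝ) ^ 2)⁻¹) := by
        rw [Real.log_inv, Real.log_pow, Real.exp_le_exp, neg_le_neg_iff,
          le_div_iff₀ (by positivity)]
        push_cast
        linarith
    _ = ((n : ℝ) ^ 2)⁻¹ := Real.exp_log (by positivity)

/-- The `i`-th edge `(i + 1, i + 2)` of the cycle `1, 2, …, k + 3, 1`; vertex `0` stays outside. -/
def cycleEdge {k : ℕ} (i : Fin (k + 3)) : Fin (k + 4) × Fin (k + 4) := (i.succ, (i + 1).succ)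

def cycleStrategy (k : ℕ) : PostStrategy (k + 4) := fun h u =>
  Fin.cases 0 (fun i => if cycleEdge i ∈ h then 0 else (cycleEdge i).2) u

theorem cycleStrategy_eq_zero_or {k : ℕ} (h : List (Fin (k + 4) × Fin (k + 4)))
    (u : Fin (k + 4)) :
    cycleStrategy k h u = 0 ∨
      ∃ i, (u, cycleStrategy k h u) = cycleEdge i ∧ cycleEdge i ∉ h := by
  cases u using Fin.cases with
  | zero => exact Or.inl rfl
  | succ i =>
    by_cases hi : cycleEdge i ∈ h
    · simp [cycleStrategy, hi]
    · exact Or.inr ⟨i, by simp only [cycleStrategy, Fin.cases_succ, if_neg hi]; rfl, hi⟩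

theorem cycleEdge_mem_append_cycleStrategy {k : ℕ} (h : List (Fin (k + 4) × Fin (k + 4)))
    (i : Fin (k + 3)) : cycleEdge i ∈ h ++ [(i.succ, cycleStrategy k h i.succ)] := by
  by_cases hi : cycleEdge i ∈ h
  · exact List.mem_append_left _ hi
  · simp only [cycleStrategy, Fin.cases_succ, if_neg hi]
    exact List.mem_concat_self

def IsCycleHistory {k : ℕ} (h : List (Fin (k + 4) × Fin (k + 4))) : Prop :=
  (∀ p ∈ h, p.2 = 0 ∨ ∃ i, p = cycleEdge i) ∧ (h.filter (·.2 ≠ 0)).Nodup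

theorem IsCycleHistory.append {k : ℕ} {h : List (Fin (k + 4) × Fin (k + 4))}
    (hh : IsCycleHistory h) {p : Fin (k + 4) × Fin (k + 4)}
    (hp : p.2 = 0 ∨ ∃ i, p = cycleEdge i ∧ cycleEdge i ∉ h) : IsCycleHistory (h ++ [p]) := by
  obtain ⟨hedge, hnodup⟩ := hh
  rcases hp with hp | ⟨i, rfl, hi⟩
  · refine ⟨?_, by simpa [List.filter_append, hp] using hnodup⟩
    simp only [List.mem_append, List.mem_singleton]
    rintro q (hq | rfl)
    exacts [hedge q hq, Or.inl hp]
  · refine ⟨?_, ?_⟩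
    · simp only [List.mem_append, List.mem_singleton]
      rintro q (hq | rfl)
      exacts [hedge q hq, Or.inr ⟨i, rfl⟩]
    · have hsucc : (cycleEdge i).2 ≠ 0 := by simp [cycleEdge]
      rw [List.filter_append, List.filter_singleton, decide_eq_true hsucc, cond_true,
        ← List.concat_eq_append]
      exact hnodup.concat fun hmem => hi (List.mem_of_mem_filter hmem)

theorem IsCycleHistory.postBuildAux {k : ℕ} {h : List (Fin (k + 4) × Fin (k + 4))}
    (hh : IsCycleHistory h) (us : List (Fin (k + 4))) :
    IsCycleHistory (postBuildAux (cycleStrategy k) h us) := by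
  induction us generalizing h with
  | nil => exact hh
  | cons u us ih => exact ih (hh.append (cycleStrategy_eq_zero_or h u))

theorem cycleEdge_mem_postBuildAux {k : ℕ} (h : List (Fin (k + 4) × Fin (k + 4)))
    {us : List (Fin (k + 4))} {i : Fin (k + 3)} (hi : i.succ ∈ us) :
    cycleEdge i ∈ postBuildAux (cycleStrategy k) h us := by
  induction us generalizing h with
  | nil => cases hi
  | cons u us ih =>
    rcases List.mem_cons.1 hi with rfl | hi
    · exact (postBuildAux_prefix _ _ us).subset (cycleEdge_mem_append_cycleStrategy h i)
    · exact ih _ hi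

theorem hasInducedCycle_postTraj_cycleStrategy {k : ℕ} (us : List (Fin (k + 4)))
    (hcov : ∀ i : Fin (k + 3), i.succ ∈ us) :
    HasInducedCycle (postTraj (cycleStrategy k) us) := by
  set l := postTraj (cycleStrategy k) us
  have hl : IsCycleHistory l := IsCycleHistory.postBuildAux ⟨by simp, by simp⟩ us
  have hinduced : inducedEdgeList l (univ.map (Fin.succEmb _)) =
      (l.filter (·.2 ≠ 0)).map fun p => s(p.1, p.2) := by
    unfold inducedEdgeList
    congr 1
    refine List.filter_congr fun p hp => ?_
    rcases hl.1 p hp with h0 | ⟨i, rfl⟩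
    · simp [h0]
    · simp [cycleEdge]
  have hcycle : ∀ p ∈ l.filter (·.2 ≠ 0), ∃ i, p = cycleEdge i := by
    intro p hp
    simp only [List.mem_filter, decide_eq_true_eq] at hp
    exact (hl.1 p hp.1).resolve_left hp.2
  refine hasInducedCycle_of_mem_inducedEdgeList_iff l (Fin.succEmb _) rfl ?_ ?_
  · rw [hinduced]
    refine hl.2.map_on fun p hp q hq hpq => ?_
    obtain ⟨i, rfl⟩ := hcycle p hp
    obtain ⟨j, rfl⟩ := hcycle q hq
    refine congrArg cycleEdge (sym2_mk_add_one_injective k (Sym2.map.injective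
      (Fin.succ_injective _) ?_))
    simpa [cycleEdge] using hpq
  · intro e
    rw [hinduced, List.mem_map]
    constructor
    · rintro ⟨p, hp, rfl⟩
      obtain ⟨i, rfl⟩ := hcycle p hp
      exact ⟨i, rfl⟩
    · rintro ⟨i, rfl⟩
      have hmem := cycleEdge_mem_postBuildAux [] (hcov i)
      exact ⟨cycleEdge i, List.mem_filter.2 ⟨hmem, by simp [cycleEdge]⟩, rfl⟩

theorem one_sub_inv_le_probPost_cycleStrategy (k t : ℕ)
    (ht : 2 * ((k + 4 : ℕ) : ℝ) * Real.log (k + 4 : ℕ) ≤ t) :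
    1 - ((k + 4 : ℕ) : ℝ)⁻¹ ≤
      probPost (k + 4) t (cycleStrategy k) fun l => ∃ s ≤ t, HasInducedCycle (l.take s) := by
  set n : ℕ := k + 4
  have hn : 0 < n := by omega
  have hcover := one_sub_card_mul_le_probPost (t := t) hn (cycleStrategy k)
    (fun l => ∃ s ≤ t, HasInducedCycle (l.take s)) (univ.map (Fin.succEmb _))
    fun u hu => ⟨t, le_rfl, by
      rw [List.take_of_length_le (by simp [length_postTraj])]
      exact hasInducedCycle_postTraj_cycleStrategy _ fun i =>
        List.mem_ofFn.2 (hu _ (mem_map_of_mem _ (mem_univ i)))⟩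
  have hT : (#(univ.map (Fin.succEmb (k + 3))) : ℝ) ≤ n := by norm_num [n]
  calc 1 - (n : ℝ)⁻¹ = 1 - n * ((n : ℝ) ^ 2)⁻¹ := by field_simp
    _ ≤ 1 - #(univ.map (Fin.succEmb (k + 3))) * (1 - (n : ℝ)⁻¹) ^ t := by
        gcongr
        · exact pow_nonneg (sub_nonneg.2 (inv_le_one_of_one_le₀ (Nat.one_le_cast.2 hn))) t
        · exact one_sub_inv_pow_le_inv_sq hn ht
    _ ≤ _ := hcover

/-- There are a constant `C > 0` and a post-positional strategy that a.a.s.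
constructs, within `C·n·ln n` rounds, a multigraph containing an induced simple
`(n-1)`-cycle. -/
theorem post_induced_cycle :
    ∃ C : ℝ, 0 < C ∧ ∃ Spost : (n : ℕ) → PostStrategy n,
      Tendsto (fun n : ℕ => probPost n ⌈C * (n : ℝ) * Real.log n⌉₊ (Spost n)
          (fun l => ∃ s ≤ ⌈C * (n : ℝ) * Real.log n⌉₊, HasInducedCycle (l.take s)))
        atTop (nhds 1) := by
  refine ⟨2, two_pos, fun n => match n with | k + 4 => cycleStrategy k | _ => fun _ u => u, ?_⟩
  rw [← tendsto_add_atTop_iff_nat 4]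
  have hlower : Tendsto (fun k : ℕ => 1 - ((k + 4 : ℕ) : ℝ)⁻¹) atTop (nhds 1) := by
    simpa using tendsto_const_nhds.sub
      ((tendsto_inv_atTop_nhds_zero_nat (𝕜 := ℝ)).comp (tendsto_add_atTop_nat 4))
  refine tendsto_of_tendsto_of_tendsto_of_le_of_le hlower tendsto_const_nhds
    (fun k => one_sub_inv_le_probPost_cycleStrategy k _ (Nat.le_ceil _))
    (fun k => probPost_le_one _ _)
end

section
/- Let T_𝓑 be a reduced block tree of a connected graph G. Then for every vertex v ∈ V(G), the set {B ∈ V(T_𝓑) : v ∈ B} induces a connected subtree in T_𝓑. -/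
/-- `B` satisfies the defining property of a block: for any two distinct vertices
`x, y ∈ B` with `xy ∉ E(G)`, one cannot separate `x` from `y` by removing fewer
than 2 vertices (i.e. after deleting any set `S` of fewer than 2 vertices avoiding
`x` and `y`, `x` and `y` are still joined by a path). -/
def BlockProp {V : Type*} (G : SimpleGraph V) (B : Set V) : Prop :=
  ∀ x ∈ B, ∀ y ∈ B, x ≠ y → ¬ G.Adj x y →
    ∀ S : Set V, S.ncard < 2 → ∀ (hx : x ∉ S) (hy : y ∉ S),
      (G.induce Sᶜ).Reachable ⟨x, hx⟩ ⟨y, hy⟩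

/-- The block decomposition `𝓑(G)`: the maximal vertex sets satisfying `BlockProp`. -/
def blocks {V : Type*} (G : SimpleGraph V) : Set (Set V) :=
  {B | Maximal (fun A => BlockProp G A) B}

/-- The block graph `G_𝓑`: vertices are the blocks of `G`, two distinct blocks
being adjacent iff they intersect. -/
def blockGraph {V : Type*} (G : SimpleGraph V) : SimpleGraph ↥(blocks G) where
  Adj A B := A ≠ B ∧ ((A : Set V) ∩ (B : Set V)).Nonempty
  symm := ⟨by
    rintro A B ⟨h1, h2⟩
    exact ⟨h1.symm, by rwa [Set.inter_comm]⟩⟩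
  loopless := ⟨fun A h => h.1 rfl⟩

/-!
Let `A, A₁, …, C` be a path in the block graph with `v ∈ A ∩ C`, and suppose `v ∉ A₁`. Since
`A₁ ∪ {v}` is not a block, some set `S` of at most one vertex separates `v` from a vertex of
`A₁`. Call a block reached if it has a vertex outside `S` joined to `v` in `G - S`: `A` and `C`
are reached, `A₁` is not, and two intersecting blocks of which only one is reached meet inside
`S`. Hence the first reached block `Y` after `A₁` shares the vertex of `S` with `A`, so `A, Y, …, C`
is a strictly shorter path whose second block misses `v` (a block meeting `A` in two vertices is
`A`). By induction no such path exists, so every block on a path between two blocks containing `v`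
contains `v`; this applies in particular to paths of the spanning tree `T`.
-/

open SimpleGraph

section BlockTheory

variable {V : Type*} {G : SimpleGraph V}

theorem Set.Subsingleton.blockProp {B : Set V} (hB : B.Subsingleton) : BlockProp G B :=
  fun _ hx _ hy hxy => absurd (hB hx hy) hxy

theorem BlockProp.reachable {B S : Set V} (hB : BlockProp G B) (hS : S.ncard < 2) {x y : V}
    (hx : x ∈ B) (hy : y ∈ B) (hxS : x ∉ S) (hyS : y ∉ S) :
    (G.induce Sᶜ).Reachable ⟨x, hxS⟩ ⟨y, hyS⟩ := by
  rcases eq_or_ne x y with rfl | hxy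
  · rfl
  by_cases hadj : G.Adj x y
  · exact Adj.reachable (show (G.induce Sᶜ).Adj ⟨x, hxS⟩ ⟨y, hyS⟩ from hadj)
  · exact hB x hx y hy hxy hadj S hS hxS hyS

theorem BlockProp.union [Finite V] {A B : Set V} (hA : BlockProp G A) (hB : BlockProp G B)
    {x y : V} (hxy : x ≠ y) (hx : x ∈ A ∩ B) (hy : y ∈ A ∩ B) : BlockProp G (A ∪ B) := by
  have cross : ∀ p ∈ A, ∀ q ∈ B, ∀ S : Set V, S.ncard < 2 → ∀ (hpS : p ∉ S) (hqS : q ∉ S),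
      (G.induce Sᶜ).Reachable ⟨p, hpS⟩ ⟨q, hqS⟩ := by
    intro p hp q hq S hS hpS hqS
    obtain ⟨z, hzA, hzB, hzS⟩ : ∃ z ∈ A, z ∈ B ∧ z ∉ S := by
      by_contra! h
      exact hxy (((Set.ncard_le_one S.toFinite).1 (by omega)) x (h x hx.1 hx.2) y (h y hy.1 hy.2))
    exact (hA.reachable hS hp hzA hpS hzS).trans (hB.reachable hS hzB hq hzS hqS)
  rintro p (hp | hp) q (hq | hq) hpq hadj S hS hpS hqS
  · exact hA p hp q hq hpq hadj S hS hpS hqS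
  · exact cross p hp q hq S hS hpS hqS
  · exact (cross q hq p hp S hS hqS hpS).symm
  · exact hB p hp q hq hpq hadj S hS hpS hqS

theorem eq_of_mem_blocks_of_mem_inter [Finite V] {A B : Set V} (hA : A ∈ blocks G)
    (hB : B ∈ blocks G) {x y : V} (hxy : x ≠ y) (hx : x ∈ A ∩ B) (hy : y ∈ A ∩ B) : A = B := by
  have hAB := hA.1.union hB.1 hxy hx hy
  exact (hA.eq_of_le hAB Set.subset_union_left).trans
    (hB.eq_of_le hAB Set.subset_union_right).symm

theorem exists_mem_blocks [Finite V] (G : SimpleGraph V) (v : V) : ∃ B ∈ blocks G, v ∈ B := by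
  obtain ⟨B, hvB, hB⟩ :=
    Finite.exists_le_maximal (p := BlockProp G) (Set.subsingleton_singleton (a := v)).blockProp
  exact ⟨B, hB, hvB rfl⟩

theorem exists_separator_of_notMem_block {C : Set V} (hC : C ∈ blocks G) {v : V} (hv : v ∉ C) :
    ∃ x ∈ C, ∃ S : Set V, S.ncard < 2 ∧ ∃ (hvS : v ∉ S) (hxS : x ∉ S),
      ¬ (G.induce Sᶜ).Reachable ⟨v, hvS⟩ ⟨x, hxS⟩ := by
  by_contra! hsep
  refine hv (hC.2 (y := insert v C) ?_ (Set.subset_insert v C) (Set.mem_insert v C))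
  rintro p (rfl | hp) q (rfl | hq) hpq hadj S hS hpS hqS
  · exact absurd rfl hpq
  · exact hsep q hq S hS hpS hqS
  · exact (hsep p hp S hS hqS hpS).symm
  · exact hC.1 p hp q hq hpq hadj S hS hpS hqS

def ReachesAvoiding (G : SimpleGraph V) (S : Set V) {v : V} (hv : v ∉ S) (D : Set V) : Prop :=
  ∃ p ∈ D, ∃ hp : p ∉ S, (G.induce Sᶜ).Reachable ⟨v, hv⟩ ⟨p, hp⟩

section ReachesAvoiding

variable {S : Set V} {v : V} {hv : v ∉ S}

theorem ReachesAvoiding.reachable {D : Set V} (h : ReachesAvoiding G S hv D) (hD : BlockProp G D)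
    (hS : S.ncard < 2) {x : V} (hx : x ∈ D) (hxS : x ∉ S) :
    (G.induce Sᶜ).Reachable ⟨v, hv⟩ ⟨x, hxS⟩ := by
  obtain ⟨p, hp, hpS, hvp⟩ := h
  exact hvp.trans (hD.reachable hS hp hx hpS hxS)

theorem mem_of_reachesAvoiding_of_not {X Y : Set V} (hY : BlockProp G Y) (hS : S.ncard < 2)
    (hRY : ReachesAvoiding G S hv Y) (hRX : ¬ ReachesAvoiding G S hv X) {t : V} (htX : t ∈ X)
    (htY : t ∈ Y) : t ∈ S := by
  by_contra htS
  exact hRX ⟨t, htX, htS, hRY.reachable hY hS htY htS⟩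

end ReachesAvoiding

section BlockGraphPath

variable [Finite V] {v : V}

theorem exists_shorter_path_of_notMem_snd {A A₁ C : ↥(blocks G)} (h : (blockGraph G).Adj A A₁)
    (q : (blockGraph G).Walk A₁ C) (hp : (Walk.cons h q).IsPath) (hA : v ∈ (A : Set V))
    (hA₁ : v ∉ (A₁ : Set V)) (hC : v ∈ (C : Set V)) :
    ∃ (Y : ↥(blocks G)) (h' : (blockGraph G).Adj A Y) (q' : (blockGraph G).Walk Y C),
      (Walk.cons h' q').IsPath ∧ q'.length < q.length ∧ v ∉ (Y : Set V) := by
  obtain ⟨x, hxA₁, S, hS, hvS, hxS, hsep⟩ := exists_separator_of_notMem_block A₁.2 hA₁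
  set R : ↥(blocks G) → Prop := fun D => ReachesAvoiding G S hvS D
  have hRA : R A := ⟨v, hA, hvS, .rfl⟩
  have hRA₁ : ¬ R A₁ := fun hR => hsep (hR.reachable A₁.2.1 hS hxA₁ hxS)
  obtain ⟨t, htA, htA₁⟩ := h.2
  have htS : t ∈ S := mem_of_reachesAvoiding_of_not A.2.1 hS hRA hRA₁ htA₁ htA
  obtain ⟨d, hd, hRd₁, hRd₂⟩ := q.exists_boundary_dart {D | ¬ R D} hRA₁
    (not_not_intro ⟨v, hC, hvS, .rfl⟩)
  set Y := d.snd
  have hRY : R Y := not_not.1 hRd₂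
  obtain ⟨t', htd, htY⟩ := d.adj.2
  have htY : t ∈ (Y : Set V) := by
    rwa [(Set.ncard_le_one S.toFinite).1 (by omega) t htS t'
      (mem_of_reachesAvoiding_of_not Y.2.1 hS hRY hRd₁ htd htY)]
  have hYq : Y ∈ q.support := q.dart_snd_mem_support_of_mem_darts hd
  have hAY : A ≠ Y := fun hAY => (Walk.cons_isPath_iff h q).1 hp |>.2 (hAY ▸ hYq)
  have hvt : v ≠ t := fun hvt => hvS (hvt ▸ htS)
  have hAdjY : (blockGraph G).Adj A Y := ⟨hAY, t, htA, htY⟩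
  refine ⟨Y, hAdjY, q.dropUntil Y hYq, ?_,
    Walk.length_dropUntil_lt_length hYq (fun hY => hRA₁ (hY ▸ hRY)), fun hvY => hAY ?_⟩
  · rw [Walk.cons_isPath_iff]
    exact ⟨hp.of_cons.dropUntil hYq,
      fun hA' => ((Walk.cons_isPath_iff h q).1 hp).2 (q.support_dropUntil_subset_support hYq hA')⟩
  · exact Subtype.ext (eq_of_mem_blocks_of_mem_inter A.2 Y.2 hvt ⟨hA, hvY⟩ ⟨htA, htY⟩)

theorem mem_snd_of_isPath {A A₁ C : ↥(blocks G)} (h : (blockGraph G).Adj A A₁)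
    (q : (blockGraph G).Walk A₁ C) (hp : (Walk.cons h q).IsPath) (hA : v ∈ (A : Set V))
    (hC : v ∈ (C : Set V)) : v ∈ (A₁ : Set V) := by
  by_contra hA₁
  obtain ⟨Y, h', q', hp', hlt, hY⟩ := exists_shorter_path_of_notMem_snd h q hp hA hA₁ hC
  exact hY (mem_snd_of_isPath h' q' hp' hA hC)
termination_by q.length

theorem mem_of_mem_support_of_isPath {A C : ↥(blocks G)} {p : (blockGraph G).Walk A C}
    (hp : p.IsPath) (hA : v ∈ (A : Set V)) (hC : v ∈ (C : Set V)) :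
    ∀ B ∈ p.support, v ∈ (B : Set V) := by
  induction p with
  | nil => simpa using hA
  | cons h q ih =>
    have hA₁ := mem_snd_of_isPath h q hp hA hC
    simpa [hA] using ih hp.of_cons hA₁ hC

end BlockGraphPath

end BlockTheory

theorem reduced_block_tree_subtree_general {V : Type*} [Fintype V] (G : SimpleGraph V)
    (T : SimpleGraph ↥(blocks G)) (hT : T ≤ blockGraph G)
    (hTree : T.IsTree) (v : V) :
    (T.induce {B : ↥(blocks G) | v ∈ (B : Set V)}).Connected := by
  obtain ⟨B, hB, hvB⟩ := exists_mem_blocks G v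
  refine induce_connected_of_patches ⟨B, hB⟩ hvB fun {A} hvA => ?_
  obtain ⟨p, hp⟩ := (hTree.connected.preconnected ⟨B, hB⟩ A).some.toPath
  have hsupp : {D | D ∈ p.support} ⊆ {D : ↥(blocks G) | v ∈ (D : Set V)} := fun D hD =>
    mem_of_mem_support_of_isPath (hp.mapLe hT) hvB hvA D (by simpa using hD)
  exact ⟨_, hsupp, p.start_mem_support, p.end_mem_support,
    p.connected_induce_support.preconnected _ _⟩

/-- In a reduced block tree `T` of a connected graph `G`, for every vertex `v` the
set of blocks containing `v` induces a connected subtree of `T`. -/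
theorem reduced_block_tree_subtree {V : Type*} [Fintype V] (G : SimpleGraph V)
    (hG : G.Connected) (T : SimpleGraph ↥(blocks G)) (hT : T ≤ blockGraph G)
    (hTree : T.IsTree) (v : V) :
    (T.induce {B : ↥(blocks G) | v ∈ (B : Set V)}).Connected :=
  reduced_block_tree_subtree_general G T hT hTree v
end
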